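/- arXiv:math/0610497 — 4 statements merged into one kernel-verified Lean document; each statement's English description precedes it below -/
import Mathlib

section
/- Let $\Delta$ be a basis of $\mathfrak{a}^*$, $\mathfrak{a}^+$ the associated simplicial cone, $\lambda_1 = \sum_{\alpha} m_\alpha\alpha$ with $m_\alpha>0$, and $\lambda_i = \lambda_1 - \sum_\alpha m_{i,\alpha}\alpha$ with all $m_{i,\alpha}\ge 0$; set $\operatorname{supp}\lambda_i = \{\alpha : m_{i,\alpha}>0\}$. Let $\chi = \sum v_\alpha\alpha$ with $a_\chi, I_\chi, b_\chi$ defined as usual. Suppose $\operatorname{supp}\lambda_i \not\subseteq I_\chi$. Then for every $\delta > 0$ there is $C_\delta > 0$ such that for all $T \ge 2$, $\int_{\{a\in\mathfrak{a}^+ : e^{\lambda_1(a)}\le T,\ e^{\lambda_i(a)} \ge \delta T\}} e^{\chi(a)}\,da \le C_\delta\, T^{a_\chi}(\log T)^{b_\chi - 2}$. -/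
open MeasureTheory Filter Topology Set

lemma peel {nn : ℕ} (m : Fin (nn+1) → ℝ) (hm : ∀ i, 0 < m i) (i0 : Fin (nn+1))
    (g : Fin (nn+1) → ℝ → ℝ) (hg1 : g i0 = fun _ => 1)
    (hgint : ∀ i, i ≠ i0 → Integrable (g i))
    (hgm : ∀ i, Measurable (g i)) (hgnn : ∀ i x, 0 ≤ g i x)
    (a b : ℝ) :
    Integrable (fun x : Fin (nn+1) → ℝ =>
        (Set.Icc a b).indicator 1 (∑ i, m i * x i) * ∏ i, g i (x i)) ∧
      (∫ x : Fin (nn+1) → ℝ,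
        (Set.Icc a b).indicator 1 (∑ i, m i * x i) * ∏ i, g i (x i))
      = ((volume (Set.Icc a b)).toReal / m i0) *
          ∏ k : Fin nn, ∫ t : ℝ, g (i0.succAbove k) t := by
  classical
  set V : ℝ := (volume (Set.Icc a b)).toReal with hV
  have hVnn : 0 ≤ V := ENNReal.toReal_nonneg
  set F : ℝ × (Fin nn → ℝ) → ℝ := fun p =>
    (Set.Icc a b).indicator 1 (m i0 * p.1 + ∑ k, m (i0.succAbove k) * p.2 k) *
      ∏ k, g (i0.succAbove k) (p.2 k) with hF
  set e := MeasurableEquiv.piFinSuccAbove (fun _ : Fin (nn+1) => ℝ) i0 with he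
  have hcomp : ∀ x : Fin (nn+1) → ℝ,
      (Set.Icc a b).indicator 1 (∑ i, m i * x i) * ∏ i, g i (x i) = F (e x) := by
    intro x
    have hsum : ∑ i, m i * x i = m i0 * x i0 + ∑ k, m (i0.succAbove k) * x (i0.succAbove k) :=
      Fin.sum_univ_succAbove (fun i => m i * x i) i0
    have hprod : ∏ i, g i (x i) = ∏ k, g (i0.succAbove k) (x (i0.succAbove k)) := by
      rw [Fin.prod_univ_succAbove (fun i => g i (x i)) i0, hg1]; simp
    have he1 : (e x).1 = x i0 := rfl
    have he2 : ∀ k, (e x).2 k = x (i0.succAbove k) := fun k => rfl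
    simp only [hF, he1, he2, hsum, hprod]
  have hmF : Measurable F := by
    have h1 : Measurable fun p : ℝ × (Fin nn → ℝ) =>
        m i0 * p.1 + ∑ k, m (i0.succAbove k) * p.2 k := by
      apply Measurable.add
      · exact (measurable_fst.const_mul _)
      · apply Finset.measurable_sum
        intro k _
        exact ((measurable_pi_apply k).comp measurable_snd).const_mul _
    have h2 : Measurable ((Set.Icc a b).indicator (1 : ℝ → ℝ)) :=
      measurable_const.indicator measurableSet_Icc
    apply (h2.comp h1).mul
    apply Finset.measurable_prod
    intro k _
    exact (hgm _).comp ((measurable_pi_apply k).comp measurable_snd)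
  have hslice : ∀ y : Fin nn → ℝ, (fun t : ℝ => F (t, y)) =
      fun t => (∏ k, g (i0.succAbove k) (y k)) *
        (Set.Icc ((a - ∑ k, m (i0.succAbove k) * y k) / m i0)
          ((b - ∑ k, m (i0.succAbove k) * y k) / m i0)).indicator 1 t := by
    intro y
    funext t
    simp only [hF]
    set R := ∑ k, m (i0.succAbove k) * y k with hR
    have hiff : (m i0 * t + R ∈ Set.Icc a b) ↔ (t ∈ Set.Icc ((a - R)/m i0) ((b - R)/m i0)) := by
      simp only [Set.mem_Icc]
      constructor
      · rintro ⟨h1, h2⟩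
        constructor
        · rw [div_le_iff₀ (hm i0)]; nlinarith [hm i0]
        · rw [le_div_iff₀ (hm i0)]; nlinarith [hm i0]
      · rintro ⟨h1, h2⟩
        rw [div_le_iff₀ (hm i0)] at h1
        rw [le_div_iff₀ (hm i0)] at h2
        constructor <;> nlinarith [hm i0]
    by_cases hmem : m i0 * t + R ∈ Set.Icc a b
    · rw [Set.indicator_of_mem hmem, Set.indicator_of_mem (hiff.1 hmem)]
      simp [mul_comm]
    · rw [Set.indicator_of_notMem hmem, Set.indicator_of_notMem (fun hc => hmem (hiff.2 hc))]
      ring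
  have hslicevol : ∀ R : ℝ,
      (volume (Set.Icc ((a - R) / m i0) ((b - R) / m i0))).toReal = V / m i0 := by
    intro R
    rw [Real.volume_Icc, hV, Real.volume_Icc]
    have h3 : (b - R) / m i0 - (a - R) / m i0 = (b - a) / m i0 := by
      rw [div_sub_div_same]; congr 1; ring
    have h4 := max_div_div_right (le_of_lt (hm i0)) (b - a) (0:ℝ)
    rw [zero_div] at h4
    rw [h3, ENNReal.toReal_ofReal', ENNReal.toReal_ofReal', h4]
  have hindint : ∀ (l u : ℝ), Integrable ((Set.Icc l u).indicator (1:ℝ→ℝ)) := by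
    intro l u
    refine IntegrableOn.integrable_indicator ?_ measurableSet_Icc
    refine integrableOn_const (ne_of_lt ?_)
    rw [Real.volume_Icc]; exact ENNReal.ofReal_lt_top
  have hintind : ∀ (l u : ℝ), (∫ t : ℝ, (Set.Icc l u).indicator (1:ℝ→ℝ) t)
      = (volume (Set.Icc l u)).toReal := by
    intro l u
    rw [integral_indicator measurableSet_Icc]
    simp [ENNReal.toReal_ofReal']
  have hPint : Integrable (fun y : Fin nn → ℝ => ∏ k, g (i0.succAbove k) (y k)) :=
    Integrable.fintype_prod (fun k => hgint _ (Fin.succAbove_ne i0 k))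
  have hPnn : ∀ y : Fin nn → ℝ, 0 ≤ ∏ k, g (i0.succAbove k) (y k) :=
    fun y => Finset.prod_nonneg (fun k _ => hgnn _ _)
  have hFint : Integrable F := by
    rw [MeasureTheory.Measure.volume_eq_prod, integrable_prod_iff' hmF.aestronglyMeasurable]
    constructor
    · refine Filter.Eventually.of_forall (fun y => ?_)
      rw [hslice y]
      exact ((hindint _ _).const_mul _)
    · have hnrm : (fun y : Fin nn → ℝ => ∫ t : ℝ, ‖F (t, y)‖)
          = fun y => (V / m i0) * ∏ k, g (i0.succAbove k) (y k) := by
        funext y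
        have h1 : (fun t : ℝ => ‖F (t, y)‖) = fun t => F (t, y) := by
          funext t
          rw [Real.norm_of_nonneg]
          exact mul_nonneg (Set.indicator_nonneg (fun _ _ => zero_le_one) _) (hPnn y)
        rw [h1, hslice y, integral_const_mul, hintind, hslicevol, mul_comm]
      rw [hnrm]
      exact hPint.const_mul _
  have hMP := MeasureTheory.volume_preserving_piFinSuccAbove (fun _ : Fin (nn+1) => ℝ) i0
  have hHeq : (fun x : Fin (nn+1) → ℝ =>
      (Set.Icc a b).indicator 1 (∑ i, m i * x i) * ∏ i, g i (x i)) = F ∘ e := funext hcomp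
  constructor
  · rw [hHeq]
    exact (hMP.integrable_comp_emb e.measurableEmbedding).2 hFint
  · rw [hHeq]
    have h5 : ∫ x : Fin (nn+1) → ℝ, (F ∘ e) x = ∫ p, F p := hMP.integral_comp' F
    rw [h5]
    have h6 : ∫ p : ℝ × (Fin nn → ℝ), F p
        = ∫ y : Fin nn → ℝ, ∫ t : ℝ, F (t, y) := by
      rw [MeasureTheory.Measure.volume_eq_prod] at hFint ⊢
      exact integral_prod_symm F hFint
    rw [h6]
    have h7 : (fun y : Fin nn → ℝ => ∫ t : ℝ, F (t, y))
        = fun y => (V / m i0) * ∏ k, g (i0.succAbove k) (y k) := by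
      funext y
      rw [hslice y, integral_const_mul, hintind, hslicevol, mul_comm]
    rw [h7, integral_const_mul, MeasureTheory.integral_fintype_prod_volume_eq_prod (fun k => g (i0.succAbove k))]


lemma intind (l u : ℝ) : (∫ t : ℝ, (Set.Icc l u).indicator (1:ℝ→ℝ) t)
    = (volume (Set.Icc l u)).toReal := by
  rw [integral_indicator measurableSet_Icc]
  simp [ENNReal.toReal_ofReal']

lemma intexp (cc : ℝ) (hcc : cc < 0) :
    (∫ t : ℝ, (Set.Ici (0:ℝ)).indicator (fun t => Real.exp (cc * t)) t) = (-cc)⁻¹ := by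
  rw [integral_indicator measurableSet_Ici, integral_Ici_eq_integral_Ioi]
  have h := integral_comp_mul_left_Ioi (fun y : ℝ => Real.exp (-y)) 0 (neg_pos.2 hcc)
  simp only [mul_zero] at h
  have h2 : (fun x : ℝ => Real.exp (-(-cc * x))) = fun x => Real.exp (cc * x) := by
    funext x; ring_nf
  rw [h2] at h
  rw [h, integral_exp_neg_Ioi_zero]
  simp

set_option maxHeartbeats 1000000 in
/-- Lemma 6.2(b): constraining a lower-order exponent `λ_i = λ₁ - ∑_j n j • α_j`
(whose support is not contained in `I_χ`) to stay comparable to the top exponent `λ₁`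
reduces the power of `log T` by one.  Coordinates with respect to the basis `Δ`:
`λ₁ x = ∑ m i * x i`, `χ x = ∑ v i * x i`, `λ_i x = ∑ (m j - n j) * x j`. -/
theorem stmt_2 (r : ℕ) (hr : 0 < r) (m v : Fin r → ℝ) (hm : ∀ i, 0 < m i)
    (aχ : ℝ) (haχ : IsGreatest (Set.range fun i => v i / m i) aχ)
    (b : ℕ) (hb : b = (Finset.univ.filter fun i : Fin r => ¬ v i / m i < aχ).card)
    (n : Fin r → ℝ) (hn : ∀ j, 0 ≤ n j)
    (hsupp : ∃ j, 0 < n j ∧ ¬ v j / m j < aχ)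
    (δ : ℝ) (hδ : 0 < δ) :
    ∃ C > (0:ℝ), ∀ T : ℝ, 2 ≤ T →
      (∫ x in {x : Fin r → ℝ | (∀ i, 0 ≤ x i) ∧ Real.exp (∑ i, m i * x i) ≤ T
            ∧ δ * T ≤ Real.exp (∑ i, (m i - n i) * x i)},
          Real.exp (∑ i, v i * x i)) ≤ C * T ^ aχ * Real.log T ^ ((b : ℤ) - 2) := by
  classical
  obtain ⟨nn, rfl⟩ : ∃ nn, r = nn + 1 := ⟨r - 1, (Nat.succ_pred_eq_of_pos hr).symm⟩
  obtain ⟨j, hnj, hjtop⟩ := hsupp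
  set c : Fin (nn+1) → ℝ := fun i => v i - aχ * m i with hcdef
  have hvle : ∀ i, v i ≤ aχ * m i := by
    intro i
    have h1 : v i / m i ≤ aχ := haχ.2 (Set.mem_range_self i)
    calc v i = (v i / m i) * m i := (div_mul_cancel₀ _ (hm i).ne').symm
      _ ≤ aχ * m i := mul_le_mul_of_nonneg_right h1 (hm i).le
  have hcle : ∀ i, c i ≤ 0 := fun i => sub_nonpos.2 (hvle i)
  have hczero : ∀ i, (c i = 0 ↔ ¬ v i / m i < aχ) := by
    intro i
    constructor
    · intro h hlt
      have : v i = aχ * m i := by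
        have := sub_eq_zero.1 h; linarith [this]
      rw [this, mul_div_assoc, div_self (hm i).ne', mul_one] at hlt
      exact lt_irrefl _ hlt
    · intro h
      have h1 : v i / m i ≤ aχ := haχ.2 (Set.mem_range_self i)
      have h2 : v i / m i = aχ := le_antisymm h1 (not_lt.1 h)
      have : v i = aχ * m i := by
        rw [← h2, div_mul_cancel₀ _ (hm i).ne']
      simp [hcdef, this]
  have hcj : c j = 0 := (hczero j).2 hjtop
  have hczneg : ∀ i, c i ≠ 0 → c i < 0 := fun i h => lt_of_le_of_ne (hcle i) h
  set J : Finset (Fin (nn+1)) := Finset.univ.filter (fun i => c i = 0) with hJdef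
  have hJb : J.card = b := by
    rw [hb]
    congr 1
    apply Finset.filter_congr
    intro i _
    simp [hczero i]
  have hjJ : j ∈ J := by simp [hJdef, hcj]
  set W : ℝ := -Real.log δ with hWdef
  set B : ℝ := W / n j with hBdef
  set K : ℝ := max 1 (δ ^ aχ) with hKdef
  have hK1 : (1:ℝ) ≤ K := le_max_left _ _
  have hKpos : 0 < K := lt_of_lt_of_le one_pos hK1
  by_cases hb2 : 2 ≤ b
  · -- main case : b ≥ 2
    have hJej : (J.erase j).Nonempty := by
      rw [← Finset.card_pos, Finset.card_erase_of_mem hjJ, hJb]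
      omega
    obtain ⟨i0, hi0⟩ := hJej
    have hi0j : i0 ≠ j := (Finset.mem_erase.1 hi0).1
    have hci0 : c i0 = 0 := by
      have := (Finset.mem_erase.1 hi0).2
      simpa [hJdef] using this
    set ee : Fin (nn+1) → ℝ := fun i =>
      if i = i0 then 1 else if i = j then max B 0 else
        if c i = 0 then (m i)⁻¹ else (-(c i))⁻¹ with heedef
    have heenn : ∀ i, 0 ≤ ee i := by
      intro i
      simp only [heedef]
      by_cases e1 : i = i0
      · rw [if_pos e1]; norm_num
      rw [if_neg e1]
      by_cases e2 : i = j
      · rw [if_pos e2]; exact le_max_right _ _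
      rw [if_neg e2]
      by_cases e3 : c i = 0
      · rw [if_pos e3]; exact (inv_pos.2 (hm i)).le
      · rw [if_neg e3]
        exact (inv_pos.2 (by rw [neg_pos]; exact hczneg i e3)).le
    have hC1 : 0 ≤ K * (max W 0 / m i0 * ∏ i, ee i) := by
      apply mul_nonneg hKpos.le
      apply mul_nonneg (div_nonneg (le_max_right _ _) (hm i0).le)
      exact Finset.prod_nonneg (fun i _ => heenn i)
    refine ⟨K * (max W 0 / m i0 * ∏ i, ee i) + 1, by linarith, ?_⟩
    intro T hT
    have hT0 : (0:ℝ) < T := by linarith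
    set L : ℝ := Real.log T with hLdef
    have hLpos : 0 < L := Real.log_pos (by linarith)
    -- the dominating per-coordinate functions
    set g : Fin (nn+1) → ℝ → ℝ := fun i =>
      if i = i0 then (fun _ => 1) else if i = j then (Set.Icc 0 B).indicator 1 else
        if c i = 0 then (Set.Icc 0 (L / m i)).indicator 1 else
          (Set.Ici 0).indicator (fun t => Real.exp (c i * t)) with hgdef
    have hg1 : g i0 = fun _ => 1 := by simp [hgdef]
    have hgnn : ∀ i x, 0 ≤ g i x := by
      intro i x
      simp only [hgdef]
      by_cases e1 : i = i0
      · rw [if_pos e1]; norm_num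
      rw [if_neg e1]
      by_cases e2 : i = j
      · rw [if_pos e2]; exact Set.indicator_nonneg (fun _ _ => zero_le_one) _
      rw [if_neg e2]
      by_cases e3 : c i = 0
      · rw [if_pos e3]; exact Set.indicator_nonneg (fun _ _ => zero_le_one) _
      · rw [if_neg e3]; exact Set.indicator_nonneg (fun _ _ => (Real.exp_pos _).le) _
    have hindI : ∀ (l u : ℝ), Integrable ((Set.Icc l u).indicator (1:ℝ→ℝ)) := by
      intro l u
      refine IntegrableOn.integrable_indicator ?_ measurableSet_Icc
      refine integrableOn_const (ne_of_lt ?_)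
      rw [Real.volume_Icc]; exact ENNReal.ofReal_lt_top
    have hexpI : ∀ (cc : ℝ), cc < 0 →
        Integrable ((Set.Ici (0:ℝ)).indicator (fun t => Real.exp (cc * t))) := by
      intro cc hcc
      refine IntegrableOn.integrable_indicator ?_ measurableSet_Ici
      rw [integrableOn_Ici_iff_integrableOn_Ioi]
      have := exp_neg_integrableOn_Ioi 0 (neg_pos.2 hcc)
      simpa using this
    have hgint : ∀ i, i ≠ i0 → Integrable (g i) := by
      intro i hi
      simp only [hgdef]
      rw [if_neg hi]
      by_cases e2 : i = j
      · rw [if_pos e2]; exact hindI _ _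
      rw [if_neg e2]
      by_cases e3 : c i = 0
      · rw [if_pos e3]; exact hindI _ _
      · rw [if_neg e3]; exact hexpI _ (hczneg i e3)
    have hgm : ∀ i, Measurable (g i) := by
      intro i
      simp only [hgdef]
      by_cases e1 : i = i0
      · rw [if_pos e1]; exact measurable_const
      rw [if_neg e1]
      by_cases e2 : i = j
      · rw [if_pos e2]; exact measurable_const.indicator measurableSet_Icc
      rw [if_neg e2]
      by_cases e3 : c i = 0
      · rw [if_pos e3]; exact measurable_const.indicator measurableSet_Icc
      · rw [if_neg e3]
        exact ((Real.measurable_exp.comp (measurable_id.const_mul _))).indicator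
          measurableSet_Ici
    have hpeel := peel m hm i0 g hg1 hgint hgm hgnn (L - W) L
    -- the domain
    set A : Set (Fin (nn+1) → ℝ) := {x | (∀ i, 0 ≤ x i) ∧ Real.exp (∑ i, m i * x i) ≤ T
        ∧ δ * T ≤ Real.exp (∑ i, (m i - n i) * x i)} with hAdef
    have hmsum : Measurable (fun x : Fin (nn+1) → ℝ => ∑ i, m i * x i) :=
      Finset.measurable_sum _ (fun i _ => (measurable_pi_apply i).const_mul _)
    have hmsum2 : Measurable (fun x : Fin (nn+1) → ℝ => ∑ i, (m i - n i) * x i) :=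
      Finset.measurable_sum _ (fun i _ => (measurable_pi_apply i).const_mul _)
    have hAmeas : MeasurableSet A := by
      have h1 : A = {x : Fin (nn+1) → ℝ | ∀ i, 0 ≤ x i}
          ∩ ({x : Fin (nn+1) → ℝ | Real.exp (∑ i, m i * x i) ≤ T}
            ∩ {x : Fin (nn+1) → ℝ | δ * T ≤ Real.exp (∑ i, (m i - n i) * x i)}) := rfl
      rw [h1]
      refine MeasurableSet.inter ?_ (MeasurableSet.inter ?_ ?_)
      · have h2 : {x : Fin (nn+1) → ℝ | ∀ i, 0 ≤ x i} = ⋂ i, {x | 0 ≤ x i} := by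
          ext x; simp
        rw [h2]
        exact MeasurableSet.iInter
          (fun i => measurableSet_le measurable_const (measurable_pi_apply i))
      · exact measurableSet_le (Real.measurable_exp.comp hmsum) measurable_const
      · exact measurableSet_le measurable_const (Real.measurable_exp.comp hmsum2)
    -- facts about points of A
    have hAfacts : ∀ x ∈ A, L - W ≤ ∑ i, m i * x i ∧ ∑ i, m i * x i ≤ L
        ∧ x j ≤ B ∧ ∀ i, x i ≤ L / m i := by
      intro x hx
      obtain ⟨hx0, hup, hlo⟩ := hx
      have hsumle : ∑ i, m i * x i ≤ L := (Real.le_log_iff_exp_le hT0).2 hup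
      have hmn : ∑ i, (m i - n i) * x i ≤ ∑ i, m i * x i :=
        Finset.sum_le_sum (fun i _ => by nlinarith [hn i, hx0 i])
      have hlog : Real.log (δ * T) ≤ ∑ i, (m i - n i) * x i := by
        have h2 : Real.log (δ * T) ≤ Real.log (Real.exp (∑ i, (m i - n i) * x i)) :=
          (Real.log_le_log_iff (by positivity) (Real.exp_pos _)).2 hlo
        rwa [Real.log_exp] at h2
      have hldT : Real.log (δ * T) = Real.log δ + L := Real.log_mul hδ.ne' hT0.ne'
      have hsumge : L - W ≤ ∑ i, m i * x i := by
        have h3 := le_trans hlog hmn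
        rw [hldT] at h3
        rw [hWdef]
        linarith
      have hnsum : ∑ i, n i * x i ≤ W := by
        have h3 : ∑ i, m i * x i - ∑ i, (m i - n i) * x i = ∑ i, n i * x i := by
          rw [← Finset.sum_sub_distrib]
          exact Finset.sum_congr rfl (fun i _ => by ring)
        have h4 := hlog
        rw [hldT] at h4
        rw [hWdef]
        linarith
      have hxj : x j ≤ B := by
        have h5 : n j * x j ≤ ∑ i, n i * x i :=
          Finset.single_le_sum (fun i _ => mul_nonneg (hn i) (hx0 i)) (Finset.mem_univ j)
        rw [hBdef, le_div_iff₀ hnj]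
        nlinarith
      refine ⟨hsumge, hsumle, hxj, fun i => ?_⟩
      rw [le_div_iff₀ (hm i)]
      have h6 : m i * x i ≤ ∑ k, m k * x k :=
        Finset.single_le_sum (fun k _ => mul_nonneg (hm k).le (hx0 k)) (Finset.mem_univ i)
      nlinarith
    -- the exponential bound on the top part
    have hTpos : (0:ℝ) < T ^ aχ := Real.rpow_pos_of_pos hT0 _
    have hexpb : ∀ s : ℝ, L - W ≤ s → s ≤ L → Real.exp (aχ * s) ≤ K * T ^ aχ := by
      intro s h1 h2
      have hTrp : T ^ aχ = Real.exp (aχ * L) := by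
        rw [Real.rpow_def_of_pos hT0, mul_comm]
      rcases le_or_gt 0 aχ with h|h
      · calc Real.exp (aχ * s) ≤ Real.exp (aχ * L) :=
              Real.exp_le_exp.2 (mul_le_mul_of_nonneg_left h2 h)
          _ = T ^ aχ := hTrp.symm
          _ ≤ K * T ^ aχ := le_mul_of_one_le_left hTpos.le hK1
      · have h3 : aχ * s ≤ aχ * (L - W) := mul_le_mul_of_nonpos_left h1 h.le
        have h4 : Real.exp (aχ * (L - W)) = δ ^ aχ * T ^ aχ := by
          rw [hWdef, Real.rpow_def_of_pos hδ, hTrp, ← Real.exp_add]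
          congr 1
          ring
        calc Real.exp (aχ * s) ≤ Real.exp (aχ * (L - W)) := Real.exp_le_exp.2 h3
          _ = δ ^ aχ * T ^ aχ := h4
          _ ≤ K * T ^ aχ := mul_le_mul_of_nonneg_right (le_max_right _ _) hTpos.le
    set H : (Fin (nn+1) → ℝ) → ℝ := fun x =>
      (Set.Icc (L - W) L).indicator 1 (∑ i, m i * x i) * ∏ i, g i (x i) with hHdef
    have hHnn : ∀ x, 0 ≤ H x := fun x =>
      mul_nonneg (Set.indicator_nonneg (fun _ _ => zero_le_one) _)
        (Finset.prod_nonneg (fun i _ => hgnn i _))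
    -- pointwise domination
    have hdom : ∀ x, A.indicator (fun x => Real.exp (∑ i, v i * x i)) x
        ≤ (K * T ^ aχ) * H x := by
      intro x
      by_cases hxA : x ∈ A
      · rw [Set.indicator_of_mem hxA]
        obtain ⟨h1, h2, h3, h4⟩ := hAfacts x hxA
        obtain ⟨hx0, -, -⟩ := hxA
        have hSind : (Set.Icc (L - W) L).indicator (1:ℝ→ℝ) (∑ i, m i * x i) = 1 :=
          Set.indicator_of_mem (Set.mem_Icc.mpr ⟨h1, h2⟩) 1
        have hgeval : ∀ i, g i (x i) = Real.exp (c i * x i) := by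
          intro i
          simp only [hgdef]
          by_cases e1 : i = i0
          · rw [if_pos e1, e1]
            simp [hci0]
          rw [if_neg e1]
          by_cases e2 : i = j
          · rw [if_pos e2, e2]
            rw [Set.indicator_of_mem (Set.mem_Icc.mpr ⟨hx0 j, h3⟩)]
            simp [hcj]
          rw [if_neg e2]
          by_cases e3 : c i = 0
          · rw [if_pos e3]
            rw [Set.indicator_of_mem (Set.mem_Icc.mpr ⟨hx0 i, h4 i⟩)]
            simp [e3]
          · rw [if_neg e3]
            rw [Set.indicator_of_mem (Set.mem_Ici.mpr (hx0 i))]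
        have hveq : (∑ i, v i * x i) = aχ * (∑ i, m i * x i) + ∑ i, c i * x i := by
          rw [Finset.mul_sum, ← Finset.sum_add_distrib]
          exact Finset.sum_congr rfl (fun i _ => by simp only [hcdef]; ring)
        have hHx : H x = ∏ i, Real.exp (c i * x i) := by
          simp only [hHdef]
          rw [hSind, one_mul]
          exact Finset.prod_congr rfl (fun i _ => hgeval i)
        rw [hHx]
        calc Real.exp (∑ i, v i * x i)
            = Real.exp (aχ * ∑ i, m i * x i) * Real.exp (∑ i, c i * x i) := by
              rw [hveq, Real.exp_add]
          _ = Real.exp (aχ * ∑ i, m i * x i) * ∏ i, Real.exp (c i * x i) := by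
              rw [Real.exp_sum]
          _ ≤ (K * T ^ aχ) * ∏ i, Real.exp (c i * x i) :=
              mul_le_mul_of_nonneg_right (hexpb _ h1 h2)
                (Finset.prod_nonneg (fun i _ => (Real.exp_pos _).le))
      · rw [Set.indicator_of_notMem hxA]
        exact mul_nonneg (mul_nonneg hKpos.le hTpos.le) (hHnn x)
    have hGint : Integrable (fun x => (K * T ^ aχ) * H x) := (hpeel.1).const_mul _
    have hmono : (∫ x in A, Real.exp (∑ i, v i * x i)) ≤ ∫ x, (K * T ^ aχ) * H x := by
      rw [← integral_indicator hAmeas]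
      exact integral_mono_of_nonneg
        (Filter.Eventually.of_forall
          (fun x => Set.indicator_nonneg (fun _ _ => (Real.exp_pos _).le) x))
        hGint (Filter.Eventually.of_forall hdom)
    have hval : (∫ x, (K * T ^ aχ) * H x)
        = (K * T ^ aχ) * (((volume (Set.Icc (L-W) L)).toReal / m i0)
            * ∏ k : Fin nn, ∫ t, g (i0.succAbove k) t) := by
      rw [integral_const_mul, hpeel.2]
    have hvol : (volume (Set.Icc (L-W) L)).toReal = max W 0 := by
      rw [Real.volume_Icc, ENNReal.toReal_ofReal']
      congr 1
      ring
    -- per coordinate bounds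
    set bnd : Fin (nn+1) → ℝ :=
      fun i => (if c i = 0 ∧ ¬ i = i0 ∧ ¬ i = j then L else 1) * ee i with hbnddef
    have hbnd_i0 : bnd i0 = 1 := by simp [hbnddef, heedef]
    have hIg : ∀ i, i ≠ i0 → (∫ t, g i t) ≤ bnd i := by
      intro i hi
      simp only [hgdef, hbnddef, heedef]
      rw [if_neg hi, if_neg hi]
      by_cases e2 : i = j
      · rw [if_pos e2, if_neg (by simp [e2]), if_pos e2, one_mul, intind]
        rw [Real.volume_Icc, ENNReal.toReal_ofReal']
        simp
      rw [if_neg e2, if_neg e2]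
      by_cases e3 : c i = 0
      · rw [if_pos e3, if_pos ⟨e3, hi, e2⟩, intind]
        rw [Real.volume_Icc, ENNReal.toReal_ofReal']
        rw [sub_zero, max_eq_left (div_nonneg hLpos.le (hm i).le)]
        rw [div_eq_mul_inv, if_pos e3]
      · rw [if_neg e3, if_neg (by tauto), intexp _ (hczneg i e3), one_mul, if_neg e3]
    have hIgnn : ∀ i, 0 ≤ ∫ t, g i t := fun i => integral_nonneg (fun t => hgnn i t)
    have hbndnn : ∀ i, 0 ≤ bnd i := by
      intro i
      simp only [hbnddef]
      apply mul_nonneg _ (heenn i)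
      split
      · exact hLpos.le
      · norm_num
    have hprod1 : (∏ k : Fin nn, ∫ t, g (i0.succAbove k) t)
        ≤ ∏ k : Fin nn, bnd (i0.succAbove k) :=
      Finset.prod_le_prod (fun k _ => hIgnn _) (fun k _ => hIg _ (Fin.succAbove_ne i0 k))
    have hprod2 : ∏ k : Fin nn, bnd (i0.succAbove k) = ∏ i, bnd i := by
      rw [Fin.prod_univ_succAbove bnd i0, hbnd_i0, one_mul]
    have hQcard : (Finset.univ.filter (fun i => c i = 0 ∧ ¬ i = i0 ∧ ¬ i = j)).card = b - 2 := by
      have hQ : Finset.univ.filter (fun i : Fin (nn+1) => c i = 0 ∧ ¬ i = i0 ∧ ¬ i = j)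
          = (J.erase i0).erase j := by
        ext i
        simp only [Finset.mem_filter, Finset.mem_univ, true_and, Finset.mem_erase, hJdef]
        tauto
      rw [hQ]
      have hji0 : j ∈ J.erase i0 := Finset.mem_erase.2 ⟨fun h => hi0j h.symm, hjJ⟩
      have hi0J : i0 ∈ J := (Finset.mem_erase.1 hi0).2
      rw [Finset.card_erase_of_mem hji0, Finset.card_erase_of_mem hi0J, hJb]
      omega
    have hprod3 : ∏ i, bnd i = L ^ (b - 2) * ∏ i, ee i := by
      simp only [hbnddef]
      rw [Finset.prod_mul_distrib]
      congr 1
      rw [← Finset.prod_filter (fun i : Fin (nn+1) => c i = 0 ∧ ¬ i = i0 ∧ ¬ i = j)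
        (fun _ => L), Finset.prod_const, hQcard]
    -- put it together
    have hYpos : (0:ℝ) < L ^ (b - 2) := pow_pos hLpos _
    have hPnn : 0 ≤ ∏ i, ee i := Finset.prod_nonneg (fun i _ => heenn i)
    have hMnn : 0 ≤ max W 0 / m i0 := div_nonneg (le_max_right _ _) (hm i0).le
    have hfinal1 : (∫ x in A, Real.exp (∑ i, v i * x i))
        ≤ (K * T ^ aχ) * (max W 0 / m i0 * (L ^ (b - 2) * ∏ i, ee i)) := by
      refine le_trans hmono ?_
      rw [hval, hvol]
      apply mul_le_mul_of_nonneg_left _ (mul_nonneg hKpos.le hTpos.le)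
      apply mul_le_mul_of_nonneg_left _ hMnn
      rw [← hprod3, ← hprod2]
      exact hprod1
    have hzpow : (L : ℝ) ^ ((b:ℤ) - 2) = L ^ (b - 2) := by
      have hcast : ((b - 2 : ℕ) : ℤ) = (b:ℤ) - 2 := by omega
      rw [← hcast, zpow_natCast]
    calc (∫ x in A, Real.exp (∑ i, v i * x i))
        ≤ (K * T ^ aχ) * (max W 0 / m i0 * (L ^ (b - 2) * ∏ i, ee i)) := hfinal1
      _ = (K * (max W 0 / m i0 * ∏ i, ee i)) * T ^ aχ * L ^ (b - 2) := by ring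
      _ ≤ (K * (max W 0 / m i0 * ∏ i, ee i) + 1) * T ^ aχ * L ^ (b - 2) := by
          apply mul_le_mul_of_nonneg_right _ hYpos.le
          apply mul_le_mul_of_nonneg_right _ hTpos.le
          linarith
      _ = (K * (max W 0 / m i0 * ∏ i, ee i) + 1) * T ^ aχ * L ^ ((b:ℤ) - 2) := by
          rw [hzpow]
  · -- case b = 1
    have hb1 : b = 1 := by
      have hjb : j ∈ Finset.univ.filter (fun i : Fin (nn+1) => ¬ v i / m i < aχ) := by
        simp only [Finset.mem_filter, Finset.mem_univ, true_and]
        exact hjtop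
      have h1 : 0 < b := by
        rw [hb]
        exact Finset.card_pos.2 ⟨j, hjb⟩
      omega
    have hJsing : J = {j} := by
      obtain ⟨a, ha⟩ := Finset.card_eq_one.1 (hJb.trans hb1)
      have : j = a := by
        have := hjJ
        rw [ha, Finset.mem_singleton] at this
        exact this
      rw [ha, this]
    have hcneg : ∀ i, i ≠ j → c i < 0 := by
      intro i hij
      apply hczneg
      intro h0
      have h1 : i ∈ J := by simp [hJdef, h0]
      rw [hJsing, Finset.mem_singleton] at h1
      exact hij h1
    have hune : (Finset.univ : Finset (Fin (nn+1))).Nonempty := ⟨j, Finset.mem_univ j⟩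
    set γ : ℝ := Finset.univ.sup' hune (fun i => if i = j then -1 else c i / m i) with hγdef
    have hγneg : γ < 0 := by
      obtain ⟨i, -, hieq⟩ :=
        Finset.exists_mem_eq_sup' hune (fun i => if i = j then -1 else c i / m i)
      rw [hγdef, hieq]
      by_cases e : i = j
      · rw [if_pos e]; norm_num
      · rw [if_neg e]; exact div_neg_of_neg_of_pos (hcneg i e) (hm i)
    have hγle : ∀ i, i ≠ j → c i ≤ γ * m i := by
      intro i hij
      have h1 : c i / m i ≤ γ := by
        have h2 := Finset.le_sup' (fun i => if i = j then -1 else c i / m i) (Finset.mem_univ i)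
        rw [if_neg hij] at h2
        exact h2
      calc c i = (c i / m i) * m i := (div_mul_cancel₀ _ (hm i).ne').symm
        _ ≤ γ * m i := mul_le_mul_of_nonneg_right h1 (hm i).le
    set C₁ : ℝ := W + m j * max B 0 with hC₁def
    set ee : Fin (nn+1) → ℝ := fun i => if i = j then max B 0 else (-(c i / 2))⁻¹ with heedef
    have heenn : ∀ i, 0 ≤ ee i := by
      intro i
      simp only [heedef]
      by_cases e : i = j
      · rw [if_pos e]; exact le_max_right _ _
      · rw [if_neg e]
        exact (inv_pos.2 (neg_pos.2 (div_neg_of_neg_of_pos (hcneg i e) two_pos))).le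
    have hPnn : 0 ≤ ∏ i, ee i := Finset.prod_nonneg (fun i _ => heenn i)
    have hefac : 0 < Real.exp (-(γ * C₁) / 2) * (2 / (-γ)) := by
      apply mul_pos (Real.exp_pos _)
      apply div_pos two_pos
      linarith
    have hC1 : 0 ≤ K * (Real.exp (-(γ * C₁) / 2) * (2 / (-γ)) * ∏ i, ee i) :=
      mul_nonneg hKpos.le (mul_nonneg hefac.le hPnn)
    refine ⟨K * (Real.exp (-(γ * C₁) / 2) * (2 / (-γ)) * ∏ i, ee i) + 1, by linarith, ?_⟩
    intro T hT
    have hT0 : (0:ℝ) < T := by linarith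
    set L : ℝ := Real.log T with hLdef
    have hLpos : 0 < L := Real.log_pos (by linarith)
    set g : Fin (nn+1) → ℝ → ℝ := fun i =>
      if i = j then (Set.Icc 0 B).indicator 1 else
        (Set.Ici 0).indicator (fun t => Real.exp (c i / 2 * t)) with hgdef
    have hgnn : ∀ i x, 0 ≤ g i x := by
      intro i x
      simp only [hgdef]
      by_cases e : i = j
      · rw [if_pos e]; exact Set.indicator_nonneg (fun _ _ => zero_le_one) _
      · rw [if_neg e]; exact Set.indicator_nonneg (fun _ _ => (Real.exp_pos _).le) _
    have hindI : ∀ (l u : ℝ), Integrable ((Set.Icc l u).indicator (1:ℝ→ℝ)) := by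
      intro l u
      refine IntegrableOn.integrable_indicator ?_ measurableSet_Icc
      refine integrableOn_const (ne_of_lt ?_)
      rw [Real.volume_Icc]; exact ENNReal.ofReal_lt_top
    have hexpI : ∀ (cc : ℝ), cc < 0 →
        Integrable ((Set.Ici (0:ℝ)).indicator (fun t => Real.exp (cc * t))) := by
      intro cc hcc
      refine IntegrableOn.integrable_indicator ?_ measurableSet_Ici
      rw [integrableOn_Ici_iff_integrableOn_Ioi]
      have := exp_neg_integrableOn_Ioi 0 (neg_pos.2 hcc)
      simpa using this
    have hgint : ∀ i, Integrable (g i) := by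
      intro i
      simp only [hgdef]
      by_cases e : i = j
      · rw [if_pos e]; exact hindI _ _
      · rw [if_neg e]
        exact hexpI _ (div_neg_of_neg_of_pos (hcneg i e) two_pos)
    set A : Set (Fin (nn+1) → ℝ) := {x | (∀ i, 0 ≤ x i) ∧ Real.exp (∑ i, m i * x i) ≤ T
        ∧ δ * T ≤ Real.exp (∑ i, (m i - n i) * x i)} with hAdef
    have hmsum : Measurable (fun x : Fin (nn+1) → ℝ => ∑ i, m i * x i) :=
      Finset.measurable_sum _ (fun i _ => (measurable_pi_apply i).const_mul _)
    have hmsum2 : Measurable (fun x : Fin (nn+1) → ℝ => ∑ i, (m i - n i) * x i) :=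
      Finset.measurable_sum _ (fun i _ => (measurable_pi_apply i).const_mul _)
    have hAmeas : MeasurableSet A := by
      have h1 : A = {x : Fin (nn+1) → ℝ | ∀ i, 0 ≤ x i}
          ∩ ({x : Fin (nn+1) → ℝ | Real.exp (∑ i, m i * x i) ≤ T}
            ∩ {x : Fin (nn+1) → ℝ | δ * T ≤ Real.exp (∑ i, (m i - n i) * x i)}) := rfl
      rw [h1]
      refine MeasurableSet.inter ?_ (MeasurableSet.inter ?_ ?_)
      · have h2 : {x : Fin (nn+1) → ℝ | ∀ i, 0 ≤ x i} = ⋂ i, {x | 0 ≤ x i} := by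
          ext x; simp
        rw [h2]
        exact MeasurableSet.iInter
          (fun i => measurableSet_le measurable_const (measurable_pi_apply i))
      · exact measurableSet_le (Real.measurable_exp.comp hmsum) measurable_const
      · exact measurableSet_le measurable_const (Real.measurable_exp.comp hmsum2)
    have hAfacts : ∀ x ∈ A, L - W ≤ ∑ i, m i * x i ∧ ∑ i, m i * x i ≤ L ∧ x j ≤ B := by
      intro x hx
      obtain ⟨hx0, hup, hlo⟩ := hx
      have hsumle : ∑ i, m i * x i ≤ L := (Real.le_log_iff_exp_le hT0).2 hup
      have hmn : ∑ i, (m i - n i) * x i ≤ ∑ i, m i * x i :=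
        Finset.sum_le_sum (fun i _ => by nlinarith [hn i, hx0 i])
      have hlog : Real.log (δ * T) ≤ ∑ i, (m i - n i) * x i := by
        have h2 : Real.log (δ * T) ≤ Real.log (Real.exp (∑ i, (m i - n i) * x i)) :=
          (Real.log_le_log_iff (by positivity) (Real.exp_pos _)).2 hlo
        rwa [Real.log_exp] at h2
      have hldT : Real.log (δ * T) = Real.log δ + L := Real.log_mul hδ.ne' hT0.ne'
      have hsumge : L - W ≤ ∑ i, m i * x i := by
        have h3 := le_trans hlog hmn
        rw [hldT] at h3
        rw [hWdef]
        linarith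
      have hnsum : ∑ i, n i * x i ≤ W := by
        have h3 : ∑ i, m i * x i - ∑ i, (m i - n i) * x i = ∑ i, n i * x i := by
          rw [← Finset.sum_sub_distrib]
          exact Finset.sum_congr rfl (fun i _ => by ring)
        have h4 := hlog
        rw [hldT] at h4
        rw [hWdef]
        linarith
      have hxj : x j ≤ B := by
        have h5 : n j * x j ≤ ∑ i, n i * x i :=
          Finset.single_le_sum (fun i _ => mul_nonneg (hn i) (hx0 i)) (Finset.mem_univ j)
        rw [hBdef, le_div_iff₀ hnj]
        nlinarith
      exact ⟨hsumge, hsumle, hxj⟩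
    have hTpos : (0:ℝ) < T ^ aχ := Real.rpow_pos_of_pos hT0 _
    have hexpb : ∀ s : ℝ, L - W ≤ s → s ≤ L → Real.exp (aχ * s) ≤ K * T ^ aχ := by
      intro s h1 h2
      have hTrp : T ^ aχ = Real.exp (aχ * L) := by
        rw [Real.rpow_def_of_pos hT0, mul_comm]
      rcases le_or_gt 0 aχ with h|h
      · calc Real.exp (aχ * s) ≤ Real.exp (aχ * L) :=
              Real.exp_le_exp.2 (mul_le_mul_of_nonneg_left h2 h)
          _ = T ^ aχ := hTrp.symm
          _ ≤ K * T ^ aχ := le_mul_of_one_le_left hTpos.le hK1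
      · have h3 : aχ * s ≤ aχ * (L - W) := mul_le_mul_of_nonpos_left h1 h.le
        have h4 : Real.exp (aχ * (L - W)) = δ ^ aχ * T ^ aχ := by
          rw [hWdef, Real.rpow_def_of_pos hδ, hTrp, ← Real.exp_add]
          congr 1
          ring
        calc Real.exp (aχ * s) ≤ Real.exp (aχ * (L - W)) := Real.exp_le_exp.2 h3
          _ = δ ^ aχ * T ^ aχ := h4
          _ ≤ K * T ^ aχ := mul_le_mul_of_nonneg_right (le_max_right _ _) hTpos.le
    -- pointwise domination
    set Cst : ℝ := K * T ^ aχ * Real.exp (γ * (L - C₁) / 2) with hCstdef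
    have hCstpos : 0 < Cst := by
      apply mul_pos (mul_pos hKpos hTpos) (Real.exp_pos _)
    have hdom : ∀ x, A.indicator (fun x => Real.exp (∑ i, v i * x i)) x
        ≤ Cst * ∏ i, g i (x i) := by
      intro x
      by_cases hxA : x ∈ A
      · rw [Set.indicator_of_mem hxA]
        obtain ⟨h1, h2, h3⟩ := hAfacts x hxA
        obtain ⟨hx0, -, -⟩ := hxA
        have hgeval : ∀ i, g i (x i) = Real.exp (c i / 2 * x i) := by
          intro i
          simp only [hgdef]
          by_cases e : i = j
          · rw [if_pos e, e]
            rw [Set.indicator_of_mem (Set.mem_Icc.mpr ⟨hx0 j, h3⟩)]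
            simp [hcj]
          · rw [if_neg e]
            rw [Set.indicator_of_mem (Set.mem_Ici.mpr (hx0 i))]
        have hM : L - C₁ ≤ ∑ i ∈ Finset.univ.erase j, m i * x i := by
          have h7 := Finset.sum_erase_add Finset.univ (fun i => m i * x i) (Finset.mem_univ j)
          have hmjxj : m j * x j ≤ m j * max B 0 :=
            mul_le_mul_of_nonneg_left (le_trans h3 (le_max_left _ _)) (hm j).le
          rw [hC₁def]
          linarith
        have hcs : ∑ i, c i * x i ≤ γ * (L - C₁) := by
          have hSS : ∑ i, c i * x i = ∑ i ∈ Finset.univ.erase j, c i * x i := by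
            have h7 := Finset.sum_erase_add Finset.univ (fun i => c i * x i) (Finset.mem_univ j)
            rw [hcj] at h7
            linarith
          have h8 : ∑ i ∈ Finset.univ.erase j, c i * x i
              ≤ ∑ i ∈ Finset.univ.erase j, γ * (m i * x i) := by
            apply Finset.sum_le_sum
            intro i hi
            have hij := (Finset.mem_erase.1 hi).1
            have h9 := hγle i hij
            nlinarith [hx0 i]
          have h9 : ∑ i ∈ Finset.univ.erase j, γ * (m i * x i)
              = γ * ∑ i ∈ Finset.univ.erase j, m i * x i := (Finset.mul_sum _ _ _).symm
          have h10 : γ * (∑ i ∈ Finset.univ.erase j, m i * x i) ≤ γ * (L - C₁) :=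
            mul_le_mul_of_nonpos_left hM hγneg.le
          linarith
        have hveq : (∑ i, v i * x i) = aχ * (∑ i, m i * x i) + ∑ i, c i * x i := by
          rw [Finset.mul_sum, ← Finset.sum_add_distrib]
          exact Finset.sum_congr rfl (fun i _ => by simp only [hcdef]; ring)
        have h11 : ∑ i, c i * x i ≤ γ * (L - C₁) / 2 + ∑ i, c i / 2 * x i := by
          have h12 : ∑ i, c i / 2 * x i = (∑ i, c i * x i) / 2 := by
            rw [Finset.sum_div]
            exact Finset.sum_congr rfl (fun i _ => by ring)
          rw [h12]
          nlinarith [hcs]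
        calc Real.exp (∑ i, v i * x i)
            = Real.exp (aχ * ∑ i, m i * x i) * Real.exp (∑ i, c i * x i) := by
              rw [hveq, Real.exp_add]
          _ ≤ (K * T ^ aχ) * Real.exp (∑ i, c i * x i) :=
              mul_le_mul_of_nonneg_right (hexpb _ h1 h2) (Real.exp_pos _).le
          _ ≤ (K * T ^ aχ) * (Real.exp (γ * (L - C₁) / 2) * Real.exp (∑ i, c i / 2 * x i)) := by
              rw [← Real.exp_add]
              exact mul_le_mul_of_nonneg_left (Real.exp_le_exp.2 h11)
                (mul_pos hKpos hTpos).le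
          _ = Cst * ∏ i, Real.exp (c i / 2 * x i) := by
              rw [hCstdef, Real.exp_sum]
              ring
          _ = Cst * ∏ i, g i (x i) := by
              congr 1
              exact (Finset.prod_congr rfl (fun i _ => (hgeval i).symm))
      · rw [Set.indicator_of_notMem hxA]
        exact mul_nonneg hCstpos.le (Finset.prod_nonneg (fun i _ => hgnn i _))
    have hGint : Integrable (fun x : Fin (nn+1) → ℝ => Cst * ∏ i, g i (x i)) :=
      (Integrable.fintype_prod (fun i => hgint i)).const_mul _
    have hmono : (∫ x in A, Real.exp (∑ i, v i * x i))
        ≤ ∫ x : Fin (nn+1) → ℝ, Cst * ∏ i, g i (x i) := by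
      rw [← integral_indicator hAmeas]
      exact integral_mono_of_nonneg
        (Filter.Eventually.of_forall
          (fun x => Set.indicator_nonneg (fun _ _ => (Real.exp_pos _).le) x))
        hGint (Filter.Eventually.of_forall hdom)
    have hIg : ∀ i, (∫ t, g i t) = ee i := by
      intro i
      simp only [hgdef, heedef]
      by_cases e : i = j
      · rw [if_pos e, if_pos e, intind, Real.volume_Icc, ENNReal.toReal_ofReal']
        rw [sub_zero]
      · rw [if_neg e, if_neg e, intexp _ (div_neg_of_neg_of_pos (hcneg i e) two_pos)]
    have hval : (∫ x : Fin (nn+1) → ℝ, Cst * ∏ i, g i (x i)) = Cst * ∏ i, ee i := by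
      rw [integral_const_mul, MeasureTheory.integral_fintype_prod_volume_eq_prod g]
      congr 1
      exact Finset.prod_congr rfl (fun i _ => hIg i)
    -- the exponential factor gives the L⁻¹
    have hexpL : Real.exp (γ * (L - C₁) / 2)
        ≤ Real.exp (-(γ * C₁) / 2) * (2 / (-γ)) * L⁻¹ := by
      have hu : 0 < (-γ / 2) * L := mul_pos (by linarith) hLpos
      have h12 : (-γ / 2) * L ≤ Real.exp ((-γ / 2) * L) := by
        nlinarith [Real.add_one_le_exp ((-γ / 2) * L)]
      have h15 : Real.exp ((γ / 2) * L) ≤ ((-γ / 2) * L)⁻¹ := by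
        rw [show (γ / 2) * L = -((-γ / 2) * L) by ring, Real.exp_neg]
        exact inv_anti₀ hu h12
      have h14 : ((-γ / 2) * L)⁻¹ = (2 / (-γ)) * L⁻¹ := by
        rw [mul_inv, inv_div]
      have hsplit : Real.exp (γ * (L - C₁) / 2)
          = Real.exp (-(γ * C₁) / 2) * Real.exp ((γ / 2) * L) := by
        rw [← Real.exp_add]
        congr 1
        ring
      calc Real.exp (γ * (L - C₁) / 2)
          = Real.exp (-(γ * C₁) / 2) * Real.exp ((γ / 2) * L) := hsplit
        _ ≤ Real.exp (-(γ * C₁) / 2) * ((2 / (-γ)) * L⁻¹) :=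
            mul_le_mul_of_nonneg_left (h15.trans_eq h14) (Real.exp_pos _).le
        _ = Real.exp (-(γ * C₁) / 2) * (2 / (-γ)) * L⁻¹ := by ring
    have hone : (L:ℝ) ^ ((b:ℤ) - 2) = L⁻¹ := by
      rw [hb1]
      norm_num
    calc (∫ x in A, Real.exp (∑ i, v i * x i))
        ≤ Cst * ∏ i, ee i := by rw [← hval]; exact hmono
      _ = (K * T ^ aχ) * Real.exp (γ * (L - C₁) / 2) * ∏ i, ee i := by
          rw [hCstdef]
      _ ≤ (K * T ^ aχ) * (Real.exp (-(γ * C₁) / 2) * (2 / (-γ)) * L⁻¹) * ∏ i, ee i := by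
          apply mul_le_mul_of_nonneg_right _ hPnn
          exact mul_le_mul_of_nonneg_left hexpL (mul_pos hKpos hTpos).le
      _ = (K * (Real.exp (-(γ * C₁) / 2) * (2 / (-γ)) * ∏ i, ee i)) * T ^ aχ * L⁻¹ := by
          ring
      _ ≤ (K * (Real.exp (-(γ * C₁) / 2) * (2 / (-γ)) * ∏ i, ee i) + 1) * T ^ aχ * L⁻¹ := by
          apply mul_le_mul_of_nonneg_right _ (inv_pos.2 hLpos).le
          apply mul_le_mul_of_nonneg_right _ hTpos.le
          linarith
      _ = (K * (Real.exp (-(γ * C₁) / 2) * (2 / (-γ)) * ∏ i, ee i) + 1) * T ^ aχ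
            * L ^ ((b:ℤ) - 2) := by
          rw [hone]
end

section
/- Let $\Sigma$ be a root system in a Euclidean space with simple system $\Delta_\sigma$, let $\lambda_\iota$ be a dominant weight with $\lambda_\iota = \sum_{\alpha\in\Delta_\sigma} m_\alpha\alpha$ where $m_\alpha > 0$ for all $\alpha$, and let $2\rho = \sum_{\alpha\in\Delta_\sigma} u_\alpha\alpha$ with $u_\alpha > 0$. Call $I \subseteq \Delta_\sigma$ $\lambda_\iota$-connected if $I \cup \{\lambda_\iota\}$ is connected (its Dynkin-type graph, with edges given by nonzero inner products, is connected). For $\lambda_\iota$-connected $I \subsetneq \Delta_\sigma$, define $a_\iota(I) = \max\{u_\alpha/m_\alpha : \alpha \in \Delta_\sigma\setminus I\}$ and $I_\iota(I) = I \cup \{\alpha \in \Delta_\sigma\setminus I : u_\alpha/m_\alpha < a_\iota(I)\}$. Then any subset $J \subseteq \Delta_\sigma$ containing $I_\iota(I)$ is $\lambda_\iota$-connected; in particular $I_\iota(I)$ is $\lambda_\iota$-connected. -/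
/-- A finite set of vectors is connected (in the Dynkin-diagram sense) if it cannot be
partitioned into two nonempty mutually orthogonal subsets. -/
def IsConnSet {E : Type*} [NormedAddCommGroup E] [InnerProductSpace ℝ E] [DecidableEq E]
    (S : Finset E) : Prop :=
  ∀ S₁ S₂ : Finset E, S₁ ∪ S₂ = S → Disjoint S₁ S₂ → S₁.Nonempty → S₂.Nonempty →
    (∀ x ∈ S₁, ∀ y ∈ S₂, (inner ℝ x y : ℝ) = 0) → False

open Finset in
/-- Coefficient extraction from linear independence of a finset family. -/
lemma helper_coeff {E : Type*} [NormedAddCommGroup E] [InnerProductSpace ℝ E]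
    (Δ : Finset E)
    (hind : LinearIndependent ℝ (fun x : (Δ : Set E) => (x : E)))
    (g : E → ℝ) (h : ∑ γ ∈ Δ, g γ • γ = 0) : ∀ γ ∈ Δ, g γ = 0 := by
  intro γ hγ
  have h2 : ∑ x : (Δ : Set E), g x • (x : E) = 0 := by
    rw [Finset.sum_finset_coe (fun γ => g γ • γ) Δ]; exact h
  exact Fintype.linearIndependent_iff.mp hind (fun x => g x) h2 ⟨γ, hγ⟩

open Finset in
/-- The asymmetric core: given an orthogonal partition with `lam ∈ S₂` and `S₁`
nonempty, derive a contradiction. -/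
lemma helper_core {E : Type*} [NormedAddCommGroup E] [InnerProductSpace ℝ E] [DecidableEq E]
    (Δ : Finset E)
    (hΔindep : LinearIndependent ℝ (fun x : (Δ : Set E) => (x : E)))
    (u m : E → ℝ) (hm : ∀ α ∈ Δ, 0 < m α)
    (lam : E) (hlam : lam = ∑ α ∈ Δ, m α • α)
    (twoρpos : ∀ α ∈ Δ, 0 < (inner ℝ (∑ γ ∈ Δ, u γ • γ) α : ℝ))
    (I : Finset E) (hI : I ⊆ Δ) (hIconn : IsConnSet (I ∪ {lam}))
    (aI : ℝ) (haI : IsGreatest ((fun α => u α / m α) '' ((Δ \ I : Finset E) : Set E)) aI)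
    (J : Finset E) (hJΔ : J ⊆ Δ)
    (hIJ : I ∪ (Δ \ I).filter (fun α => u α / m α < aI) ⊆ J)
    (S₁ S₂ : Finset E) (hunion : S₁ ∪ S₂ = J ∪ {lam}) (hdisj : Disjoint S₁ S₂)
    (hne₁ : S₁.Nonempty)
    (horth : ∀ x ∈ S₁, ∀ y ∈ S₂, (inner ℝ x y : ℝ) = 0)
    (hlamS₂ : lam ∈ S₂) : False := by
  classical
  have hIsubJ : I ⊆ J := fun x hx => hIJ (mem_union_left _ hx)
  have hlamnotS₁ : lam ∉ S₁ := fun h => (Finset.disjoint_left.mp hdisj h) hlamS₂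
  have hS₁J : S₁ ⊆ J := by
    intro x hx
    have : x ∈ J ∪ {lam} := hunion ▸ mem_union_left _ hx
    rcases mem_union.mp this with h | h
    · exact h
    · exact absurd (mem_singleton.mp h ▸ hx) hlamnotS₁
  have hS₁Δ : S₁ ⊆ Δ := hS₁J.trans hJΔ
  -- Step: S₁ ∩ I = ∅
  have hS₁I : ∀ α ∈ S₁, α ∉ I := by
    intro α hα hαI
    refine hIconn (I ∩ S₁) ((I ∩ S₂) ∪ {lam}) ?_ ?_ ⟨α, mem_inter.mpr ⟨hαI, hα⟩⟩
      ⟨lam, mem_union_right _ (mem_singleton_self lam)⟩ ?_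
    · ext x
      have hxk : x ∈ I → x ∈ S₁ ∨ x ∈ S₂ := fun h => by
        have : x ∈ S₁ ∪ S₂ := by rw [hunion]; exact mem_union_left _ (hIsubJ h)
        exact mem_union.mp this
      simp only [mem_union, mem_inter, mem_singleton]
      constructor
      · tauto
      · tauto
    · refine Finset.disjoint_left.mpr ?_
      intro x hx hx'
      have hx1 : x ∈ S₁ := (mem_inter.mp hx).2
      rcases mem_union.mp hx' with h | h
      · exact Finset.disjoint_left.mp hdisj hx1 (mem_inter.mp h).2
      · exact hlamnotS₁ (mem_singleton.mp h ▸ hx1)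
    · intro x hx y hy
      have hx1 : x ∈ S₁ := (mem_inter.mp hx).2
      rcases mem_union.mp hy with h | h
      · exact horth x hx1 y (mem_inter.mp h).2
      · exact horth x hx1 y (mem_singleton.mp h ▸ hlamS₂)
  -- bounds from the max
  have hle : ∀ γ ∈ Δ, γ ∉ I → u γ ≤ aI * m γ := by
    intro γ hγ hγI
    have hmem : u γ / m γ ∈ ((fun α => u α / m α) '' ((Δ \ I : Finset E) : Set E)) :=
      ⟨γ, by simp [hγ, hγI], rfl⟩
    exact (div_le_iff₀ (hm γ hγ)).mp (haI.2 hmem)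
  -- set up w
  set twoρ : E := ∑ γ ∈ Δ, u γ • γ with htwoρ
  set w : E := ∑ γ ∈ S₁, (aI * m γ - u γ) • γ with hw
  -- key identity : for α ∈ S₁, ⟪twoρ + w, α⟫ = 0
  have hkey : ∀ α ∈ S₁, (inner ℝ (twoρ + w) α : ℝ) = 0 := by
    intro α hα
    have hlamα : (inner ℝ lam α : ℝ) = 0 := by
      rw [real_inner_comm]; exact horth α hα lam hlamS₂
    have hlamα' : ∑ γ ∈ Δ, m γ * (inner ℝ γ α : ℝ) = 0 := by
      rw [← hlamα, hlam, sum_inner]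
      exact Finset.sum_congr rfl fun γ _ => (real_inner_smul_left γ α (m γ)).symm
    have hsdiff : ∀ γ ∈ Δ \ S₁, u γ * (inner ℝ γ α : ℝ) = aI * m γ * (inner ℝ γ α : ℝ) := by
      intro γ hγ
      obtain ⟨hγΔ, hγS₁⟩ := mem_sdiff.mp hγ
      by_cases hγJ : γ ∈ J
      · have hγS₂ : γ ∈ S₂ := by
          have : γ ∈ S₁ ∪ S₂ := hunion ▸ mem_union_left _ hγJ
          rcases mem_union.mp this with h | h
          · exact absurd h hγS₁
          · exact h
        have : (inner ℝ γ α : ℝ) = 0 := by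
          rw [real_inner_comm]; exact horth α hα γ hγS₂
        rw [this]; ring
      · -- γ ∉ J, hence γ ∉ I and u γ / m γ = aI
        have hγI : γ ∉ I := fun h => hγJ (hIsubJ h)
        have hnotlt : ¬ (u γ / m γ < aI) := by
          intro hlt
          exact hγJ (hIJ (mem_union_right _ (mem_filter.mpr ⟨mem_sdiff.mpr ⟨hγΔ, hγI⟩, hlt⟩)))
        have heq : u γ / m γ = aI := le_antisymm
          ((div_le_iff₀ (hm γ hγΔ)).mpr (hle γ hγΔ hγI)) (not_lt.mp hnotlt)
        have : u γ = aI * m γ := by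
          rw [div_eq_iff (ne_of_gt (hm γ hγΔ))] at heq
          linarith
        rw [this]
    -- expand
    have e1 : (inner ℝ twoρ α : ℝ) = ∑ γ ∈ Δ, u γ * (inner ℝ γ α : ℝ) := by
      rw [htwoρ, sum_inner]
      exact Finset.sum_congr rfl fun γ _ => real_inner_smul_left γ α (u γ)
    have e2 : (inner ℝ w α : ℝ) = ∑ γ ∈ S₁, (aI * m γ - u γ) * (inner ℝ γ α : ℝ) := by
      rw [hw, sum_inner]
      exact Finset.sum_congr rfl fun γ _ => real_inner_smul_left γ α _
    rw [inner_add_left, e1, e2]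
    have split1 : ∑ γ ∈ Δ, u γ * (inner ℝ γ α : ℝ)
        = ∑ γ ∈ Δ \ S₁, u γ * (inner ℝ γ α : ℝ) + ∑ γ ∈ S₁, u γ * (inner ℝ γ α : ℝ) :=
      (Finset.sum_sdiff hS₁Δ).symm
    have split2 : ∑ γ ∈ Δ, m γ * (inner ℝ γ α : ℝ)
        = ∑ γ ∈ Δ \ S₁, m γ * (inner ℝ γ α : ℝ) + ∑ γ ∈ S₁, m γ * (inner ℝ γ α : ℝ) :=
      (Finset.sum_sdiff hS₁Δ).symm
    have hsd : ∑ γ ∈ Δ \ S₁, u γ * (inner ℝ γ α : ℝ)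
        = aI * ∑ γ ∈ Δ \ S₁, m γ * (inner ℝ γ α : ℝ) := by
      rw [Finset.mul_sum]
      exact Finset.sum_congr rfl fun γ hγ => by rw [hsdiff γ hγ]; ring
    have hcomb : ∑ γ ∈ S₁, u γ * (inner ℝ γ α : ℝ)
        + ∑ γ ∈ S₁, (aI * m γ - u γ) * (inner ℝ γ α : ℝ)
        = aI * ∑ γ ∈ S₁, m γ * (inner ℝ γ α : ℝ) := by
      rw [← Finset.sum_add_distrib, Finset.mul_sum]
      exact Finset.sum_congr rfl fun γ _ => by ring
    calc ∑ γ ∈ Δ, u γ * (inner ℝ γ α : ℝ) + ∑ γ ∈ S₁, (aI * m γ - u γ) * (inner ℝ γ α : ℝ)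
        = aI * (∑ γ ∈ Δ \ S₁, m γ * (inner ℝ γ α : ℝ) + ∑ γ ∈ S₁, m γ * (inner ℝ γ α : ℝ)) := by
          rw [split1]; linarith [hsd, hcomb]
      _ = aI * ∑ γ ∈ Δ, m γ * (inner ℝ γ α : ℝ) := by rw [← split2]
      _ = 0 := by rw [hlamα']; ring
  -- ⟪twoρ, w⟫ ≥ 0
  have hρw : 0 ≤ (inner ℝ twoρ w : ℝ) := by
    rw [hw, inner_sum]
    refine Finset.sum_nonneg fun γ hγ => ?_
    rw [real_inner_smul_right]
    have hγΔ : γ ∈ Δ := hS₁Δ hγ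
    have h1 : 0 ≤ aI * m γ - u γ := by
      have := hle γ hγΔ (hS₁I γ hγ); linarith
    exact mul_nonneg h1 (le_of_lt (twoρpos γ hγΔ))
  -- ⟪twoρ + w, w⟫ = 0
  have hzero : (inner ℝ (twoρ + w) w : ℝ) = 0 := by
    rw [hw, inner_sum]
    refine Finset.sum_eq_zero fun γ hγ => ?_
    rw [real_inner_smul_right, hkey γ hγ, mul_zero]
  have hww : (inner ℝ w w : ℝ) ≤ 0 := by
    rw [inner_add_left] at hzero
    linarith
  have hw0 : w = 0 := by
    rw [← inner_self_eq_zero (𝕜 := ℝ)]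
    exact le_antisymm hww real_inner_self_nonneg
  obtain ⟨α₀, hα₀⟩ := hne₁
  have := hkey α₀ hα₀
  rw [hw0, add_zero] at this
  exact absurd this (ne_of_gt (twoρpos α₀ (hS₁Δ hα₀)))

open Classical in
theorem stmt_4 {E : Type*} [NormedAddCommGroup E] [InnerProductSpace ℝ E] [DecidableEq E]
    (Δ Sp : Finset E) (hDS : Δ ⊆ Sp)
    (hΔindep : LinearIndependent ℝ (fun x : (Δ : Set E) => (x : E)))
    (hΔnonpos : ∀ α ∈ Δ, ∀ β ∈ Δ, α ≠ β → (inner ℝ α β : ℝ) ≤ 0)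
    (hpos : ∀ β ∈ Sp, ∃ c : E → ℝ, (∀ α, 0 ≤ c α) ∧ β = ∑ α ∈ Δ, c α • α)
    (l : E → ℕ) (hl : ∀ β ∈ Sp, 1 ≤ l β)
    (u m : E → ℝ) (hu : ∀ α ∈ Δ, 0 < u α) (hm : ∀ α ∈ Δ, 0 < m α)
    (lam : E) (hlam : lam = ∑ α ∈ Δ, m α • α)
    (htwoRho : ∑ β ∈ Sp, (l β : ℝ) • β = ∑ α ∈ Δ, u α • α)
    (hW : ∀ J : Finset E, J ⊆ Δ → ∀ α ∈ J,
      (inner ℝ (∑ β ∈ Sp.filter (fun β => β ∉ Submodule.span ℝ (J : Set E)), (l β : ℝ) • β)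
        α : ℝ) = 0)
    (I : Finset E) (hI : I ⊆ Δ) (hIne : I ≠ Δ) (hIconn : IsConnSet (I ∪ {lam}))
    (aI : ℝ) (haI : IsGreatest ((fun α => u α / m α) '' ((Δ \ I : Finset E) : Set E)) aI) :
    ∀ J : Finset E, J ⊆ Δ →
      I ∪ (Δ \ I).filter (fun α => u α / m α < aI) ⊆ J →
      IsConnSet (J ∪ {lam}) := by
  -- First: positivity of ⟪2ρ, α⟫ for α ∈ Δ
  have twoρpos : ∀ α ∈ Δ, 0 < (inner ℝ (∑ γ ∈ Δ, u γ • γ) α : ℝ) := by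
    intro α hα
    have hα0 : α ≠ 0 := hΔindep.ne_zero ⟨α, hα⟩
    have hW1 := hW {α} (Finset.singleton_subset_iff.mpr hα) α (Finset.mem_singleton_self α)
    have hsplit := Finset.sum_filter_add_sum_filter_not Sp
      (fun β => β ∉ Submodule.span ℝ (({α} : Finset E) : Set E)) (fun β => (l β : ℝ) • β)
    have : (inner ℝ (∑ β ∈ Sp, (l β : ℝ) • β) α : ℝ)
        = (inner ℝ (∑ β ∈ Sp.filter (fun β => ¬ β ∉ Submodule.span ℝ (({α} : Finset E) : Set E)),
            (l β : ℝ) • β) α : ℝ) := by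
      rw [← hsplit, inner_add_left, hW1, zero_add]
    rw [← htwoRho, this, sum_inner]
    -- each term nonneg; the term at α is ≥ ‖α‖²
    have hterm : ∀ β ∈ Sp.filter (fun β => ¬ β ∉ Submodule.span ℝ (({α} : Finset E) : Set E)),
        (0:ℝ) ≤ (inner ℝ ((l β : ℝ) • β) α : ℝ) := by
      intro β hβ
      obtain ⟨hβSp, hβspan⟩ := Finset.mem_filter.mp hβ
      rw [not_not, Finset.coe_singleton, Submodule.mem_span_singleton] at hβspan
      obtain ⟨t, ht⟩ := hβspan
      obtain ⟨c, hc, hβc⟩ := hpos β hβSp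
      have ht' : t • α = ∑ γ ∈ Δ, c γ • γ := by rw [ht, ← hβc]
      have htnn : 0 ≤ t := by
        have hz : ∑ γ ∈ Δ, (c γ - if γ = α then t else 0) • γ = 0 := by
          have : ∑ γ ∈ Δ, (if γ = α then t else 0) • γ = t • α := by
            rw [Finset.sum_eq_single α (fun b _ hb => by rw [if_neg hb, zero_smul])
              (fun h => absurd hα h), if_pos rfl]
          calc ∑ γ ∈ Δ, (c γ - if γ = α then t else 0) • γ
              = ∑ γ ∈ Δ, (c γ • γ - (if γ = α then t else 0) • γ) :=
                Finset.sum_congr rfl fun γ _ => sub_smul _ _ γ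
            _ = ∑ γ ∈ Δ, c γ • γ - ∑ γ ∈ Δ, (if γ = α then t else 0) • γ :=
                Finset.sum_sub_distrib _ _
            _ = 0 := by rw [this, ← ht']; abel
        have := helper_coeff Δ hΔindep _ hz α hα
        simp at this
        linarith [hc α]
      rw [← ht, real_inner_smul_left, real_inner_smul_left, real_inner_self_eq_norm_sq]
      exact mul_nonneg (Nat.cast_nonneg _) (mul_nonneg htnn (sq_nonneg _))
    have hαmem : α ∈ Sp.filter (fun β => ¬ β ∉ Submodule.span ℝ (({α} : Finset E) : Set E)) := by
      refine Finset.mem_filter.mpr ⟨hDS hα, ?_⟩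
      rw [not_not, Finset.coe_singleton]
      exact Submodule.mem_span_singleton_self α
    have hbig := Finset.single_le_sum hterm hαmem
    have hαval : (0:ℝ) < (inner ℝ ((l α : ℝ) • α) α : ℝ) := by
      rw [real_inner_smul_left, real_inner_self_eq_norm_sq]
      have h1 : 1 ≤ (l α : ℝ) := by exact_mod_cast hl α (hDS hα)
      have h2 : 0 < ‖α‖ ^ 2 := by
        have := norm_pos_iff.mpr hα0
        positivity
      nlinarith
    linarith
  intro J hJΔ hIJ
  intro S₁ S₂ hunion hdisj hne₁ hne₂ horth
  have hlammem : lam ∈ S₁ ∪ S₂ := hunion ▸ Finset.mem_union_right _ (Finset.mem_singleton_self lam)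
  rcases Finset.mem_union.mp hlammem with hl2 | hl2
  · exact helper_core Δ hΔindep u m hm lam hlam twoρpos I hI hIconn aI haI J hJΔ hIJ
      S₂ S₁ (by rw [Finset.union_comm]; exact hunion) hdisj.symm hne₂
      (fun x hx y hy => by rw [real_inner_comm]; exact horth y hy x hx) hl2
  · exact helper_core Δ hΔindep u m hm lam hlam twoρpos I hI hIconn aI haI J hJΔ hIJ
      S₁ S₂ hunion hdisj hne₁ horth hl2
end

section
/- Let $Q(x_1,\ldots,x_n) = x_1^2 + \cdots + x_p^2 - x_{p+1}^2 - \cdots - x_{p+q}^2$ with $p, q \ge 1$, $n = p+q$, and let $V = \{x \in \mathbb{R}^n : Q(x) = c\}$ for some $c > 0$. Let $\pi : \mathbb{R}^n\setminus\{0\} \to S^{n-1}$ be the radial projection. Then the set of limit points of $\pi(v)$ as $v \in V$, $\|v\| \to \infty$, equals $\{x \in S^{n-1} : Q(x) = 0\}$. -/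
open Filter Topology

/- The Satake boundary of the quadric `{Q = c}` for the standard quadratic form of
signature `(p,q)`, `p, q ≥ 1`: the set of limit points of the radial projections
`π(v) = v/‖v‖` of points `v ∈ {Q = c}` with `‖v‖ → ∞` is exactly the intersection of
the null cone `{Q = 0}` with the unit sphere. -/
theorem stmt_9 (p q : ℕ) (hp : 1 ≤ p) (hq : 1 ≤ q) (c : ℝ) (hc : 0 < c) :
    {y : EuclideanSpace ℝ (Fin (p + q)) |
        ∃ u : ℕ → EuclideanSpace ℝ (Fin (p + q)),
          (∀ k, (∑ i : Fin (p + q), (if (i : ℕ) < p then (1:ℝ) else -1) * u k i ^ 2) = c) ∧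
          Tendsto (fun k => ‖u k‖) atTop atTop ∧
          Tendsto (fun k => ‖u k‖⁻¹ • u k) atTop (𝓝 y)}
      = {y : EuclideanSpace ℝ (Fin (p + q)) |
          ‖y‖ = 1 ∧ ∑ i : Fin (p + q), (if (i : ℕ) < p then (1:ℝ) else -1) * y i ^ 2 = 0} := by
  have hQcont : Continuous fun v : EuclideanSpace ℝ (Fin (p + q)) =>
      ∑ i : Fin (p + q), (if (i : ℕ) < p then (1:ℝ) else -1) * v i ^ 2 := by
    apply continuous_finset_sum
    intro i _
    exact continuous_const.mul (((EuclideanSpace.proj i).continuous).pow 2)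
  ext y
  simp only [Set.mem_setOf_eq]
  constructor
  · rintro ⟨u, hQ, hnorm, hlim⟩
    have hev : ∀ᶠ k in atTop, (1:ℝ) ≤ ‖u k‖ := hnorm.eventually_ge_atTop 1
    constructor
    · have h1 : Tendsto (fun k => ‖‖u k‖⁻¹ • u k‖) atTop (𝓝 ‖y‖) := hlim.norm
      have h2 : ∀ᶠ k in atTop, ‖‖u k‖⁻¹ • u k‖ = 1 := by
        filter_upwards [hev] with k hk
        have hk0 : ‖u k‖ ≠ 0 := by positivity
        rw [norm_smul, norm_inv, norm_norm, inv_mul_cancel₀ hk0]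
      exact tendsto_nhds_unique (h1.congr' h2) tendsto_const_nhds
    · have h1 : Tendsto (fun k => ∑ i : Fin (p + q),
          (if (i : ℕ) < p then (1:ℝ) else -1) * (‖u k‖⁻¹ • u k) i ^ 2) atTop
          (𝓝 (∑ i : Fin (p + q), (if (i : ℕ) < p then (1:ℝ) else -1) * y i ^ 2)) :=
        (hQcont.tendsto y).comp hlim
      have h2 : ∀ k, (∑ i : Fin (p + q),
          (if (i : ℕ) < p then (1:ℝ) else -1) * (‖u k‖⁻¹ • u k) i ^ 2)
          = ‖u k‖⁻¹ ^ 2 * c := by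
        intro k
        rw [← hQ k, Finset.mul_sum]
        refine Finset.sum_congr rfl fun i _ => ?_
        have : (‖u k‖⁻¹ • u k) i = ‖u k‖⁻¹ * u k i := rfl
        rw [this]; ring
      have h3 : Tendsto (fun k => ‖u k‖⁻¹ ^ 2 * c) atTop (𝓝 0) := by
        have : Tendsto (fun k => ‖u k‖⁻¹) atTop (𝓝 0) := hnorm.inv_tendsto_atTop
        simpa using ((this.pow 2).mul_const c)
      exact tendsto_nhds_unique (h1.congr fun k => (h2 k)) h3
  · rintro ⟨hy1, hy2⟩
    set yp : EuclideanSpace ℝ (Fin (p + q)) := WithLp.toLp 2 (fun i : Fin (p + q) => if (i : ℕ) < p then y i else 0) with hyp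
    set ym : EuclideanSpace ℝ (Fin (p + q)) := WithLp.toLp 2 (fun i : Fin (p + q) => if (i : ℕ) < p then 0 else y i) with hym
    have hysum : yp + ym = y := by
      ext i
      show yp i + ym i = y i
      by_cases h : (i : ℕ) < p <;> simp [hyp, hym, h]
    set A := ∑ i : Fin (p + q), (if (i : ℕ) < p then y i ^ 2 else 0) with hAdef
    set B := ∑ i : Fin (p + q), (if (i : ℕ) < p then 0 else y i ^ 2) with hBdef
    have hA : A + B = 1 := by
      rw [hAdef, hBdef, ← Finset.sum_add_distrib]
      have hn : ∑ i : Fin (p + q), y i ^ 2 = 1 := by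
        have h0 := EuclideanSpace.norm_eq y
        rw [hy1] at h0
        have h2 : Real.sqrt (∑ i : Fin (p + q), ‖y i‖ ^ 2) = 1 := h0.symm
        have h3 := congrArg (· ^ 2) h2
        simp only [one_pow] at h3
        rw [Real.sq_sqrt (by positivity)] at h3
        simpa [sq_abs] using h3
      rw [← hn]
      refine Finset.sum_congr rfl fun i _ => ?_
      by_cases h : (i : ℕ) < p <;> simp [h]
    have hB : A - B = 0 := by
      refine Eq.trans ?_ hy2
      rw [hAdef, hBdef, ← Finset.sum_sub_distrib]
      refine Finset.sum_congr rfl fun i _ => ?_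
      by_cases h : (i : ℕ) < p
      · simp [h]
      · simp only [h, if_false]; ring
    have hAv : A = 1/2 := by linarith
    have hBv : B = 1/2 := by linarith
    set a : ℕ → ℝ := fun k => Real.sqrt ((k:ℝ) ^ 2 + 2 * c) with hadef
    set u : ℕ → EuclideanSpace ℝ (Fin (p + q)) := fun k => a k • yp + (k : ℝ) • ym with hudef
    have hki : ∀ (k : ℕ) (i : Fin (p + q)), u k i =
        if (i : ℕ) < p then a k * y i else (k:ℝ) * y i := by
      intro k i
      show a k * yp i + (k:ℝ) * ym i = _
      by_cases h : (i : ℕ) < p <;> simp [hyp, hym, h]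
    have ha2 : ∀ k : ℕ, a k ^ 2 = (k:ℝ) ^ 2 + 2 * c :=
      fun k => Real.sq_sqrt (by positivity)
    have hQu : ∀ k, (∑ i : Fin (p + q), (if (i : ℕ) < p then (1:ℝ) else -1) * u k i ^ 2) = c := by
      intro k
      calc (∑ i : Fin (p + q), (if (i : ℕ) < p then (1:ℝ) else -1) * u k i ^ 2)
          = ∑ i : Fin (p + q), (a k ^ 2 * (if (i : ℕ) < p then y i ^ 2 else 0)
              - (k:ℝ) ^ 2 * (if (i : ℕ) < p then 0 else y i ^ 2)) := by
            refine Finset.sum_congr rfl fun i _ => ?_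
            rw [hki k i]
            by_cases h : (i : ℕ) < p <;> simp only [h, if_true, if_false] <;> ring
        _ = a k ^ 2 * A - (k:ℝ) ^ 2 * B := by
            rw [Finset.sum_sub_distrib, ← Finset.mul_sum, ← Finset.mul_sum, hAdef, hBdef]
        _ = c := by rw [ha2 k, hAv, hBv]; ring
    have hnormk : ∀ k : ℕ, ‖u k‖ = Real.sqrt ((k:ℝ) ^ 2 + c) := by
      intro k
      rw [EuclideanSpace.norm_eq]
      congr 1
      calc (∑ i : Fin (p + q), ‖u k i‖ ^ 2)
          = ∑ i : Fin (p + q), (a k ^ 2 * (if (i : ℕ) < p then y i ^ 2 else 0)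
              + (k:ℝ) ^ 2 * (if (i : ℕ) < p then 0 else y i ^ 2)) := by
            refine Finset.sum_congr rfl fun i _ => ?_
            rw [hki k i]
            by_cases h : (i : ℕ) < p <;>
              simp only [h, if_true, if_false, Real.norm_eq_abs, sq_abs] <;> ring
        _ = a k ^ 2 * A + (k:ℝ) ^ 2 * B := by
            rw [Finset.sum_add_distrib, ← Finset.mul_sum, ← Finset.mul_sum, hAdef, hBdef]
        _ = (k:ℝ) ^ 2 + c := by rw [ha2 k, hAv, hBv]; ring
    have hbase : Tendsto (fun k : ℕ => (k:ℝ) ^ 2 + c) atTop atTop := by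
      apply tendsto_atTop_add_const_right
      exact (tendsto_pow_atTop (two_ne_zero)).comp tendsto_natCast_atTop_atTop
    have hpos : ∀ k : ℕ, (0:ℝ) < (k:ℝ) ^ 2 + c := fun k => by positivity
    refine ⟨u, hQu, ?_, ?_⟩
    · refine tendsto_atTop_mono (fun k => ?_) tendsto_natCast_atTop_atTop
      rw [hnormk k]
      calc ((k:ℕ):ℝ) = Real.sqrt ((k:ℝ)^2) := (Real.sqrt_sq (Nat.cast_nonneg k)).symm
        _ ≤ Real.sqrt ((k:ℝ)^2 + c) := Real.sqrt_le_sqrt (by linarith)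
    · have hc0 : Tendsto (fun k : ℕ => c / ((k:ℝ) ^ 2 + c)) atTop (𝓝 0) :=
        tendsto_const_nhds.div_atTop hbase
      have hcoef1 : Tendsto (fun k : ℕ => (Real.sqrt ((k:ℝ)^2 + c))⁻¹ * a k) atTop (𝓝 1) := by
        have heq : ∀ k : ℕ, (Real.sqrt ((k:ℝ)^2 + c))⁻¹ * a k
            = Real.sqrt (1 + c / ((k:ℝ)^2 + c)) := by
          intro k
          rw [hadef]
          rw [← Real.sqrt_inv, ← Real.sqrt_mul (by positivity)]
          congr 1
          have := (hpos k).ne'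
          field_simp
          ring
        have h1 : Tendsto (fun k : ℕ => 1 + c / ((k:ℝ)^2 + c)) atTop (𝓝 1) := by
          simpa using tendsto_const_nhds.add hc0
        have h2 := (Real.continuous_sqrt.tendsto 1).comp h1
        simp only [Function.comp_def, Real.sqrt_one] at h2
        exact Tendsto.congr (fun k => (heq k).symm) h2
      have hcoef2 : Tendsto (fun k : ℕ => (Real.sqrt ((k:ℝ)^2 + c))⁻¹ * (k:ℝ)) atTop (𝓝 1) := by
        have heq : ∀ k : ℕ, (Real.sqrt ((k:ℝ)^2 + c))⁻¹ * (k:ℝ)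
            = Real.sqrt (1 - c / ((k:ℝ)^2 + c)) := by
          intro k
          conv_lhs => rw [show (k:ℝ) = Real.sqrt ((k:ℝ)^2) by
            rw [Real.sqrt_sq (Nat.cast_nonneg k)]]
          rw [← Real.sqrt_inv, ← Real.sqrt_mul (by positivity)]
          congr 1
          have := (hpos k).ne'
          field_simp
          rw [Real.sq_sqrt (by positivity)]; ring
        have h1 : Tendsto (fun k : ℕ => 1 - c / ((k:ℝ)^2 + c)) atTop (𝓝 1) := by
          simpa using tendsto_const_nhds.sub hc0
        have h2 := (Real.continuous_sqrt.tendsto 1).comp h1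
        simp only [Function.comp_def, Real.sqrt_one] at h2
        exact Tendsto.congr (fun k => (heq k).symm) h2
      have hfinal : Tendsto (fun k : ℕ =>
          ((Real.sqrt ((k:ℝ)^2 + c))⁻¹ * a k) • yp
          + ((Real.sqrt ((k:ℝ)^2 + c))⁻¹ * (k:ℝ)) • ym) atTop (𝓝 (yp + ym)) := by
        have := (hcoef1.smul_const yp).add (hcoef2.smul_const ym)
        simpa using this
      rw [hysum] at hfinal
      refine Tendsto.congr (fun k => ?_) hfinal
      rw [hudef]
      show _ = ‖u k‖⁻¹ • u k
      rw [hnormk k, hudef, smul_add, smul_smul, smul_smul]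
end

section
/- Let $V \subseteq W$ be as follows: $W$ a finite-dimensional real vector space with weight decomposition $W = \bigoplus_{\lambda\in\Phi} W^\lambda$ under an abelian subalgebra $\mathfrak{a}$, with highest weight $\lambda_\iota$ and all weights of the form $\lambda_\iota - \sum_{\alpha\in\Delta_\sigma} n_\alpha(\lambda)\alpha$, $n_\alpha(\lambda)\ge 0$. Fix a vector $v \in W$ with $v^{\lambda_\iota} \ne 0$, fix $J\subseteq\Delta_\sigma$, and let $v^J = \sum_{\lambda : \operatorname{supp}\lambda\subseteq J} v^\lambda$. Let $\{a_n\} \subseteq \mathfrak{a}^+$ (the cone where all $\alpha \ge 0$) satisfy: $\alpha(a_n) \to \alpha(a)$ for $\alpha \in J$ (for some $a \in \mathfrak{a}$ with $\alpha(a)\geq 0$ on $J$), and $\alpha(a_n) \to +\infty$ for $\alpha \in \Delta_\sigma\setminus J$. Assume $v^J \ne 0$. Then $\pi\big(\exp(a_n) v\big) \to \pi\big(\exp(a) v^J\big)$, where $\pi$ is radial projection to the unit sphere and $\exp(a)$ acts on $W^\lambda$ by $e^{\lambda(a)}$. (Here $e^{\lambda(a)}$ for $\lambda$ with $\operatorname{supp}\lambda\subseteq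 J$ depends only on $\alpha(a)$, $\alpha\in J$, up to the common factor $e^{\lambda_\iota(a)}$, which $\pi$ removes.) -/
open Filter Topology

lemma aux_norm_inv_smul {W : Type*} [NormedAddCommGroup W] [NormedSpace ℝ W]
    {c : ℝ} (hc : 0 < c) (w : W) : ‖c • w‖⁻¹ • (c • w) = ‖w‖⁻¹ • w := by
  rw [norm_smul, Real.norm_of_nonneg hc.le, mul_inv, smul_smul]
  congr 1
  field_simp

/- Core convergence computation of Proposition 4.5: the weight decomposition of `v`
has components `vc i` with weights `λ_i = λ_ι - ∑_j n i j • α_j` (in coordinates with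
respect to the simple roots, `λ_ι(x) = ∑_j m j x j`, `n i j ≥ 0`, and `λ_ι` itself
occurs: `n i₀ = 0` with `v^{λ_ι} = vc i₀ ≠ 0`).  If `a_N ∈ 𝔞⁺` with `α_j(a_N) → α_j(a)`
for `j ∈ J` and `α_j(a_N) → ∞` for `j ∉ J`, and `v^J ≠ 0`, then
`π(exp(a_N) v) → π(exp(a) v^J)`, where `π(w) = ‖w‖⁻¹ • w` is the radial projection
and `v^J = ∑_{supp λ_i ⊆ J} e^{λ_i(a)} vc i`. -/
open Classical in
theorem stmt_16 (r k : ℕ) {W : Type*} [NormedAddCommGroup W] [NormedSpace ℝ W]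
    (m : Fin r → ℝ) (n : Fin k → Fin r → ℝ) (hn : ∀ i j, 0 ≤ n i j)
    (vc : Fin k → W) (i₀ : Fin k) (hi₀ : ∀ j, n i₀ j = 0) (hvc : vc i₀ ≠ 0)
    (J : Finset (Fin r))
    (aseq : ℕ → Fin r → ℝ) (hpos : ∀ N j, 0 ≤ aseq N j)
    (a : Fin r → ℝ) (haJ : ∀ j ∈ J, 0 ≤ a j)
    (hconv : ∀ j ∈ J, Tendsto (fun N => aseq N j) atTop (𝓝 (a j)))
    (hdiv : ∀ j ∉ J, Tendsto (fun N => aseq N j) atTop atTop)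
    (vJ : W)
    (hvJ : vJ = ∑ i ∈ Finset.univ.filter (fun i : Fin k => ∀ j ∉ J, n i j = 0),
        Real.exp ((∑ j, m j * a j) - ∑ j, n i j * a j) • vc i)
    (hvJ0 : vJ ≠ 0) :
    Tendsto (fun N =>
        ‖(∑ i, Real.exp ((∑ j, m j * aseq N j) - ∑ j, n i j * aseq N j) • vc i : W)‖⁻¹
          • (∑ i, Real.exp ((∑ j, m j * aseq N j) - ∑ j, n i j * aseq N j) • vc i : W))
      atTop (𝓝 (‖vJ‖⁻¹ • vJ)) := by
  set f : ℕ → W := fun N => ∑ i, Real.exp (-∑ j, n i j * aseq N j) • vc i with hf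
  set L : W := ∑ i ∈ Finset.univ.filter (fun i : Fin k => ∀ j ∉ J, n i j = 0),
      Real.exp (-∑ j, n i j * a j) • vc i with hL
  -- vJ equals a positive multiple of L
  have hvJL : vJ = Real.exp (∑ j, m j * a j) • L := by
    rw [hvJ, hL, Finset.smul_sum]
    refine Finset.sum_congr rfl fun i _ => ?_
    rw [smul_smul, ← Real.exp_add, sub_eq_add_neg]
  have hL0 : L ≠ 0 := by
    intro h
    apply hvJ0
    rw [hvJL, h, smul_zero]
  -- f → L
  have hfL : Tendsto f atTop (𝓝 L) := by
    have key : Tendsto (fun N => ∑ i, Real.exp (-∑ j, n i j * aseq N j) • vc i) atTop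
        (𝓝 (∑ i, (if (∀ j ∉ J, n i j = 0) then Real.exp (-∑ j, n i j * a j) • vc i
          else 0))) := by
      apply tendsto_finset_sum
      intro i _
      by_cases hi : ∀ j ∉ J, n i j = 0
      · rw [if_pos hi]
        refine Tendsto.smul_const ?_ _
        refine (Real.continuous_exp.tendsto _).comp ?_
        refine Tendsto.neg ?_
        apply tendsto_finset_sum
        intro j _
        by_cases hj : j ∈ J
        · exact ((hconv j hj).const_mul _)
        · simp only [hi j hj, zero_mul]
          exact tendsto_const_nhds
      · rw [if_neg hi]
        push_neg at hi
        obtain ⟨j₀, hj₀, hnj₀⟩ := hi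
        have hnpos : 0 < n i j₀ := lt_of_le_of_ne (hn i j₀) (Ne.symm hnj₀)
        have hS : Tendsto (fun N => ∑ j, n i j * aseq N j) atTop atTop := by
          refine tendsto_atTop_mono (fun N => ?_) ((hdiv j₀ hj₀).const_mul_atTop hnpos)
          exact Finset.single_le_sum (f := fun j => n i j * aseq N j)
            (fun j _ => mul_nonneg (hn i j) (hpos N j)) (Finset.mem_univ j₀)
        have : Tendsto (fun N => Real.exp (-∑ j, n i j * aseq N j)) atTop (𝓝 0) :=
          Real.tendsto_exp_atBot.comp (tendsto_neg_atTop_atBot.comp hS)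
        simpa using this.smul_const (vc i)
    rw [hL, Finset.sum_filter] at *
    exact key
  -- the normalized f tends to normalized L
  have hmain : Tendsto (fun N => ‖f N‖⁻¹ • f N) atTop (𝓝 (‖L‖⁻¹ • L)) :=
    ((hfL.norm).inv₀ (norm_ne_zero_iff.2 hL0)).smul hfL
  have heqlim : ‖vJ‖⁻¹ • vJ = ‖L‖⁻¹ • L := by
    rw [hvJL]; exact aux_norm_inv_smul (Real.exp_pos _) L
  rw [heqlim]
  convert hmain using 2 with N
  have hfc : (∑ i, Real.exp ((∑ j, m j * aseq N j) - ∑ j, n i j * aseq N j) • vc i : W)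
      = Real.exp (∑ j, m j * aseq N j) • f N := by
    rw [hf, Finset.smul_sum]
    refine Finset.sum_congr rfl fun i _ => ?_
    rw [smul_smul, ← Real.exp_add, sub_eq_add_neg]
  rw [hfc, aux_norm_inv_smul (Real.exp_pos _)]
end
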